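/- Let X be a countably infinite set and f : X → X a map satisfying the bounded condition with partition X = X_1 ⊔ ⋯ ⊔ X_k. Let H be a complex Hilbert space with orthonormal basis {e_x}_{x∈X} and, for 1 ≤ i ≤ k, let T_i be the bounded operator with T_i e_x = e_{f(x)} if x ∈ X_i and T_i e_x = 0 otherwise. Then the following are equivalent: (i) there exists x ∈ X such that e_x is a cyclic vector for C*(T_1,…,T_k); (ii) x ~ y for every x, y ∈ X, where ~ is the orbit equivalence relation induced by f. -/

import Mathlib

/-- The forward orbit of `x` under `f`. -/
def orbit {X : Type*} (f : X → X) (x : X) : Set X := Set.range fun k => f^[k] x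

/-- The orbit equivalence relation induced by `f`: `x ~ y` iff the orbits meet. -/
def orbEquiv {X : Type*} (f : X → X) (x y : X) : Prop :=
  (orbit f x ∩ orbit f y).Nonempty

/-- The C*-algebra of operators generated by a set `S` of bounded operators on a complex
Hilbert space: the closure of the (non-unital) star subalgebra generated by `S`. -/
noncomputable def CstarGen {H : Type*} [NormedAddCommGroup H] [InnerProductSpace ℂ H]
    [CompleteSpace H] (S : Set (H →L[ℂ] H)) : Set (H →L[ℂ] H) :=
  closure (NonUnitalStarAlgebra.adjoin ℂ S : Set (H →L[ℂ] H))

/-!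
If `b x` is cyclic, let `C` be the orbit class of `x`. Since `f ⁻¹' C = C`, the closed span of
`b '' C` is invariant under every `Tᵢ` and every `Tᵢ⋆`, hence under the C*-algebra they generate;
it contains `b x`, so it is the whole space, and every `y` lies in `C`.

Conversely, `Tᵢ` sends `b y` to `b (f y)` and, by injectivity of `f` on `Xᵢ`, `Tᵢ⋆` sends
`b (f y)` back to `b y` for `y ∈ Xᵢ`. So the set of `y` with `b y` in the orbit of `b x` under the
generated algebra is again invariant under `f` and `f⁻¹`; it contains `x`, hence all of `X` when
there is a single orbit class, and these basis vectors span a dense subspace.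
-/

open Set
open scoped InnerProductSpace

section Orbit

variable {X : Type*} {f : X → X} {x y z : X} {C : Set X}

theorem orbEquiv_refl (f : X → X) (x : X) : orbEquiv f x x :=
  ⟨x, ⟨0, rfl⟩, ⟨0, rfl⟩⟩

theorem orbEquiv.symm (h : orbEquiv f x y) : orbEquiv f y x := by
  rwa [orbEquiv, inter_comm]

theorem orbEquiv_apply_right_iff : orbEquiv f x (f y) ↔ orbEquiv f x y := by
  constructor
  · rintro ⟨w, hx, n, hn⟩
    exact ⟨w, hx, n + 1, hn⟩
  · rintro ⟨w, ⟨m, hm⟩, n, hn⟩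
    refine ⟨f w, ⟨m + 1, ?_⟩, n, ?_⟩
    · simp only [Function.iterate_succ_apply', hm]
    · simp only [← Function.iterate_succ_apply, Function.iterate_succ_apply', hn]

theorem preimage_setOf_orbEquiv (f : X → X) (x : X) :
    f ⁻¹' {y | orbEquiv f x y} = {y | orbEquiv f x y} :=
  ext fun _ => orbEquiv_apply_right_iff

theorem orbEquiv.mem_of_preimage_eq (h : orbEquiv f x y) (hC : f ⁻¹' C = C) (hx : x ∈ C) :
    y ∈ C := by
  obtain ⟨w, ⟨m, rfl⟩, n, hn⟩ := h
  have hiter : ∀ k, f^[k] ⁻¹' C = C := fun k => by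
    rw [preimage_iterate_eq, Function.iterate_fixed hC]
  have hn : f^[n] y = f^[m] x := hn
  rw [← hiter n, mem_preimage, hn, ← mem_preimage, hiter m]
  exact hx

theorem orbEquiv.trans (h₁ : orbEquiv f x y) (h₂ : orbEquiv f y z) : orbEquiv f x z :=
  h₂.mem_of_preimage_eq (preimage_setOf_orbEquiv f x) h₁

end Orbit

theorem ContinuousLinearMap.mapsTo_topologicalClosure_span {R E : Type*} [Semiring R]
    [TopologicalSpace E] [AddCommMonoid E] [Module R E] [ContinuousAdd E]
    [ContinuousConstSMul R E] (A : E →L[R] E) {s : Set E}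
    (h : MapsTo A s (Submodule.span R s).topologicalClosure) :
    MapsTo A (Submodule.span R s).topologicalClosure (Submodule.span R s).topologicalClosure :=
  have hle : (Submodule.span R s).topologicalClosure ≤
      (Submodule.span R s).topologicalClosure.comap (A : E →ₗ[R] E) :=
    Submodule.topologicalClosure_minimal _ (Submodule.span_le.2 h)
      ((Submodule.isClosed_topologicalClosure _).preimage A.continuous)
  fun _ hv => hle hv

section HilbertBasis

variable {X 𝕜 E : Type*} [RCLike 𝕜] [NormedAddCommGroup E] [InnerProductSpace 𝕜 E]
  (b : HilbertBasis X 𝕜 E)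

theorem HilbertBasis.ext_inner {v w : E} (h : ∀ u, ⟪b u, v⟫_𝕜 = ⟪b u, w⟫_𝕜) : v = w :=
  b.repr.injective <| lp.ext <| funext fun u => by simp only [b.repr_apply_apply, h]

theorem HilbertBasis.mem_closure_span_image_iff [CompleteSpace E] {C : Set X} {v : E} :
    v ∈ (Submodule.span 𝕜 (b '' C)).topologicalClosure ↔ ∀ u ∉ C, ⟪b u, v⟫_𝕜 = 0 := by
  rw [← Submodule.orthogonal_orthogonal_eq_closure, Submodule.mem_orthogonal]
  constructor
  · intro h u hu
    refine h (b u) ((Submodule.mem_orthogonal _ _).2 fun w hw => ?_)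
    refine Submodule.mem_orthogonal_singleton_iff_inner_left.1 (Submodule.span_le.2 ?_ hw)
    rintro _ ⟨z, hz, rfl⟩
    exact Submodule.mem_orthogonal_singleton_iff_inner_left.2
      (b.orthonormal.inner_eq_zero (ne_of_mem_of_not_mem hz hu))
  · intro h w hw
    rw [← b.tsum_inner_mul_inner]
    refine (tsum_congr fun u => ?_).trans tsum_zero
    by_cases hu : u ∈ C
    · rw [(Submodule.mem_orthogonal' _ _).1 hw (b u) (Submodule.subset_span ⟨u, hu, rfl⟩),
        zero_mul]
    · rw [h u hu, mul_zero]

theorem HilbertBasis.apply_mem_closure_span_image_iff [CompleteSpace E] {C : Set X} {y : X} :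
    b y ∈ (Submodule.span 𝕜 (b '' C)).topologicalClosure ↔ y ∈ C := by
  rw [b.mem_closure_span_image_iff]
  refine ⟨fun h => by_contra fun hy => b.orthonormal.ne_zero y ?_, fun hy u hu => ?_⟩
  · simpa using h y hy
  · exact b.orthonormal.inner_eq_zero (ne_of_mem_of_not_mem hy hu).symm

theorem HilbertBasis.closure_image_apply_eq_univ {M : Submodule 𝕜 (E →L[𝕜] E)} {v : E}
    (h : ∀ y, ∃ A ∈ M, A v = b y) : closure ((fun A : E →L[𝕜] E => A v) '' M) = univ := by
  have hspan : Submodule.span 𝕜 (range b) ≤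
      M.map (ContinuousLinearMap.apply 𝕜 E v : (E →L[𝕜] E) →ₗ[𝕜] E) :=
    Submodule.span_le.2 <| range_subset_iff.2 h
  refine eq_univ_of_forall fun w => closure_mono hspan ?_
  rw [← Submodule.topologicalClosure_coe, b.dense_span]
  exact Submodule.mem_top

end HilbertBasis

section Reducing

variable {𝕜 H : Type*} [RCLike 𝕜] [NormedAddCommGroup H] [InnerProductSpace 𝕜 H]
  [CompleteSpace H]

def Submodule.reducingSubalgebra (K : Submodule 𝕜 H) :
    NonUnitalStarSubalgebra 𝕜 (H →L[𝕜] H) where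
  carrier := {A : H →L[𝕜] H | MapsTo A K K ∧ MapsTo ⇑(star A) K K}
  zero_mem' := by simp [MapsTo, zero_mem]
  add_mem' := fun ha hb => ⟨fun v hv => add_mem (ha.1 hv) (hb.1 hv),
    fun v hv => by
      rw [star_add, add_apply]; exact add_mem (ha.2 hv) (hb.2 hv)⟩
  mul_mem' := fun ha hb => ⟨ha.1.comp hb.1, by rw [star_mul]; exact hb.2.comp ha.2⟩
  smul_mem' := fun c A ha => ⟨fun v hv => K.smul_mem c (ha.1 hv),
    fun v hv => by
      rw [star_smul, smul_apply]; exact K.smul_mem _ (ha.2 hv)⟩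
  star_mem' := fun ha => ⟨ha.2, by rw [star_star]; exact ha.1⟩

theorem Submodule.isClosed_reducingSubalgebra {K : Submodule 𝕜 H} (hK : IsClosed (K : Set H)) :
    IsClosed (K.reducingSubalgebra : Set (H →L[𝕜] H)) :=
  have hinv : IsClosed {A : H →L[𝕜] H | MapsTo A K K} :=
    hK.setOfPred_mapsTo fun v _ => continuous_eval_const v
  hinv.inter (hinv.preimage continuous_star)

end Reducing

section PartialShift

variable {X 𝕜 H : Type*} [RCLike 𝕜] [NormedAddCommGroup H] [InnerProductSpace 𝕜 H]
  {b : HilbertBasis X 𝕜 H} {f : X → X} {s C : Set X} {T : H →L[𝕜] H}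

def IsPartialShift (b : HilbertBasis X 𝕜 H) (f : X → X) (s : Set X) (T : H →L[𝕜] H) : Prop :=
  ∀ x, (x ∈ s → T (b x) = b (f x)) ∧ (x ∉ s → T (b x) = 0)

namespace IsPartialShift

theorem inner_apply_eq_zero (hT : IsPartialShift b f s T) {u y : X} (h : u ∈ s → f u ≠ y) :
    ⟪T (b u), b y⟫_𝕜 = 0 := by
  by_cases hu : u ∈ s
  · rw [(hT u).1 hu]
    exact b.orthonormal.inner_eq_zero (h hu)
  · rw [(hT u).2 hu, inner_zero_left]

theorem star_apply_basis_apply [CompleteSpace H] (hT : IsPartialShift b f s T) (hinj : InjOn f s)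
    {x : X} (hx : x ∈ s) : star T (b (f x)) = b x := by
  refine b.ext_inner fun u => ?_
  rw [ContinuousLinearMap.star_eq_adjoint, ContinuousLinearMap.adjoint_inner_right]
  by_cases hux : u = x
  · simp only [hux, (hT x).1 hx, inner_self_eq_norm_sq_to_K, b.orthonormal.1]
  · rw [hT.inner_apply_eq_zero fun hu => hinj.ne hu hx hux, b.orthonormal.inner_eq_zero hux]

theorem mapsTo_closure_span [CompleteSpace H] (hT : IsPartialShift b f s T)
    (hC : C ⊆ f ⁻¹' C) :
    MapsTo T (Submodule.span 𝕜 (b '' C)).topologicalClosure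
      (Submodule.span 𝕜 (b '' C)).topologicalClosure := by
  refine T.mapsTo_topologicalClosure_span ?_
  rintro _ ⟨z, hz, rfl⟩
  by_cases hzs : z ∈ s
  · rw [(hT z).1 hzs]
    exact b.apply_mem_closure_span_image_iff.2 (hC hz)
  · rw [(hT z).2 hzs]
    exact zero_mem _

theorem star_mapsTo_closure_span [CompleteSpace H] (hT : IsPartialShift b f s T)
    (hC : f ⁻¹' C ⊆ C) :
    MapsTo ⇑(star T) (Submodule.span 𝕜 (b '' C)).topologicalClosure
      (Submodule.span 𝕜 (b '' C)).topologicalClosure := by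
  refine (star T).mapsTo_topologicalClosure_span ?_
  rintro _ ⟨z, hz, rfl⟩
  refine b.mem_closure_span_image_iff.2 fun u hu => ?_
  rw [ContinuousLinearMap.star_eq_adjoint, ContinuousLinearMap.adjoint_inner_right]
  exact hT.inner_apply_eq_zero fun _ hfu => hu (hC (show f u ∈ C from hfu ▸ hz))

end IsPartialShift

end PartialShift

section Cyclic

variable {X ι H : Type*} [NormedAddCommGroup H] [InnerProductSpace ℂ H] [CompleteSpace H]
  {b : HilbertBasis X ℂ H} {f : X → X} {Xp : ι → Set X} {Ts : ι → H →L[ℂ] H}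

theorem orbEquiv_of_cyclic (hT : ∀ i, IsPartialShift b f (Xp i) (Ts i)) {x : X}
    (hx : closure ((fun A => A (b x)) '' CstarGen (range Ts)) = univ) (y : X) :
    orbEquiv f x y := by
  set K := (Submodule.span ℂ (b '' {z | orbEquiv f x z})).topologicalClosure
  have hC := preimage_setOf_orbEquiv f x
  have hK : IsClosed (K : Set H) := Submodule.isClosed_topologicalClosure _
  have hred : CstarGen (range Ts) ⊆ K.reducingSubalgebra :=
    closure_minimal (NonUnitalStarAlgebra.adjoin_le <| range_subset_iff.2 fun i =>
      ⟨(hT i).mapsTo_closure_span hC.superset, (hT i).star_mapsTo_closure_span hC.subset⟩)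
      (Submodule.isClosed_reducingSubalgebra hK)
  have hbx : b x ∈ K := b.apply_mem_closure_span_image_iff.2 (orbEquiv_refl f x)
  have hKuniv : univ ⊆ (K : Set H) :=
    hx ▸ closure_minimal (image_subset_iff.2 fun A hA => (hred hA).1 hbx) hK
  exact b.apply_mem_closure_span_image_iff.1 (hKuniv (mem_univ (b y)))

theorem exists_mem_adjoin_apply_eq (hcover : ⋃ i, Xp i = univ) (hinj : ∀ i, InjOn f (Xp i))
    (hT : ∀ i, IsPartialShift b f (Xp i) (Ts i)) {x : X} (hall : ∀ y, orbEquiv f x y) (y : X) :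
    ∃ A ∈ NonUnitalStarAlgebra.adjoin ℂ (range Ts), A (b x) = b y := by
  set 𝒜 := NonUnitalStarAlgebra.adjoin ℂ (range Ts)
  have hgen : ∀ i, Ts i ∈ 𝒜 := fun i => NonUnitalStarAlgebra.subset_adjoin ℂ _ ⟨i, rfl⟩
  have hmem : ∀ z, ∃ i, z ∈ Xp i := fun z => mem_iUnion.1 (hcover ▸ mem_univ z)
  set R := {y | ∃ A ∈ 𝒜, A (b x) = b y}
  have hR : f ⁻¹' R = R := by
    ext z
    obtain ⟨i, hi⟩ := hmem z
    constructor
    · rintro ⟨A, hA, hAx⟩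
      refine ⟨star (Ts i) * A, mul_mem (star_mem (hgen i)) hA, ?_⟩
      rw [mul_apply_eq_comp, hAx, (hT i).star_apply_basis_apply (hinj i) hi]
    · rintro ⟨A, hA, hAx⟩
      exact ⟨Ts i * A, mul_mem (hgen i) hA, by rw [mul_apply_eq_comp, hAx, (hT i z).1 hi]⟩
  have hfx : f x ∈ R := by
    obtain ⟨i, hi⟩ := hmem x
    exact ⟨Ts i, hgen i, (hT i x).1 hi⟩
  exact (hall y).mem_of_preimage_eq hR (hR ▸ hfx)

end Cyclic

theorem cyclic_general_iff_orbit_equiv_general {X : Type*} [Infinite X]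
    (f : X → X) (k : ℕ) (Xp : Fin k → Set X)
    (hcover : (⋃ i, Xp i) = Set.univ)
    (hinj : ∀ i, Set.InjOn f (Xp i))
    {H : Type*} [NormedAddCommGroup H] [InnerProductSpace ℂ H] [CompleteSpace H]
    (b : HilbertBasis X ℂ H)
    (Ts : Fin k → H →L[ℂ] H)
    (hTs : ∀ i (x : X), (x ∈ Xp i → Ts i (b x) = b (f x)) ∧ (x ∉ Xp i → Ts i (b x) = 0)) :
    (∃ x : X, closure ((fun A => A (b x)) '' CstarGen (Set.range Ts)) = Set.univ) ↔
      ∀ x y : X, orbEquiv f x y := by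
  constructor
  · rintro ⟨x, hx⟩ y z
    exact (orbEquiv_of_cyclic hTs hx y).symm.trans (orbEquiv_of_cyclic hTs hx z)
  · intro hall
    obtain ⟨x⟩ := Infinite.nonempty X
    have hdense := b.closure_image_apply_eq_univ
      (M := (NonUnitalStarAlgebra.adjoin ℂ (range Ts)).toNonUnitalSubalgebra.toSubmodule)
      (exists_mem_adjoin_apply_eq hcover hinj hTs (hall x))
    exact ⟨x, eq_univ_of_univ_subset (hdense ▸ closure_mono (image_mono subset_closure))⟩

/-- For a map `f` satisfying the bounded condition, some basis vector `e_x` is cyclic for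
`C*(T₁,…,T_k)` iff all points of `X` are orbit equivalent. -/
theorem cyclic_general_iff_orbit_equiv {X : Type*} [Countable X] [Infinite X]
    (f : X → X) (k : ℕ) (Xp : Fin k → Set X)
    (hdisj : ∀ i j, i ≠ j → Disjoint (Xp i) (Xp j))
    (hcover : (⋃ i, Xp i) = Set.univ)
    (hinj : ∀ i, Set.InjOn f (Xp i))
    {H : Type*} [NormedAddCommGroup H] [InnerProductSpace ℂ H] [CompleteSpace H]
    (b : HilbertBasis X ℂ H)
    (Ts : Fin k → H →L[ℂ] H)
    (hTs : ∀ i (x : X), (x ∈ Xp i → Ts i (b x) = b (f x)) ∧ (x ∉ Xp i → Ts i (b x) = 0)) :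
    (∃ x : X, closure ((fun A => A (b x)) '' CstarGen (Set.range Ts)) = Set.univ) ↔
      ∀ x y : X, orbEquiv f x y :=
  cyclic_general_iff_orbit_equiv_general f k Xp hcover hinj b Ts hTs
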